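/- arXiv:2510.00712 — 2 statements merged into one kernel-verified Lean document; each statement's English description precedes it below -/
import Mathlib

section
/- For the wheel W_n on n > 3 vertices and every integer k with ⌊n/2⌋ ≤ k ≤ 2n−5, there exists a 2-coloring of the vertices of W_n with exactly k monochromatic edges. -/
/-- The number of monochromatic ("bad") edges of `G` under the vertex coloring `c`:
edges whose two endpoints receive the same color. -/
noncomputable def badCount {V : Type*} {α : Type*} (G : SimpleGraph V) (c : V → α) : ℕ :=
  {e ∈ G.edgeSet | (Sym2.map c e).IsDiag}.ncard

/-- The wheel graph with hub `none` and rim cycle on `Fin m` (for `m ≥ 3`);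
this is `W_n` with `n = m + 1` vertices and `2m = 2n - 2` edges. -/
def wheelGraph (m : ℕ) : SimpleGraph (Option (Fin m)) where
  Adj v w :=
    (v = none ∧ w ≠ none) ∨ (w = none ∧ v ≠ none) ∨
      (∃ a b : Fin m, v = some a ∧ w = some b ∧ a ≠ b ∧
        ((a.val + 1) % m = b.val ∨ (b.val + 1) % m = a.val))
  symm := by
    constructor
    rintro v w (⟨h1, h2⟩ | ⟨h1, h2⟩ | ⟨a, b, h1, h2, h3, h4⟩)
    · exact Or.inr (Or.inl ⟨h1, h2⟩)
    · exact Or.inl ⟨h1, h2⟩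
    · exact Or.inr (Or.inr ⟨b, a, h2, h1, h3.symm, h4.symm⟩)
  loopless := by
    constructor
    rintro v (⟨h1, h2⟩ | ⟨h1, h2⟩ | ⟨a, b, h1, h2, h3, h4⟩)
    · exact h2 h1
    · exact h2 h1
    · subst h1; exact h3 (Option.some_injective _ h2)

/-! Colour the hub `0` and the rim vertices of `S` also `0`. The monochromatic edges are then the
`#S` spokes into `S` together with the rim edges that do not cross the boundary of `S`, and the
rim cycle crosses that boundary twice per run of consecutive vertices of `S`. A single run of
length `s` therefore gives `s + m - 2` monochromatic edges (`1 ≤ s ≤ m - 1`), and `s` pairwise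
non-consecutive rim vertices give `m - s` (`2 s ≤ m`); with `m = n - 1` rim vertices these two
families cover every value from `⌈m / 2⌉ = ⌊n / 2⌋` to `2 m - 3 = 2 n - 5`. -/

open Finset Function

theorem badCount_eq_card_filter {V α ι : Type*} [Fintype ι] [DecidableEq α]
    (G : SimpleGraph V) (c : V → α) (e : ι → Sym2 V) (he : Injective e)
    (hrange : Set.range e = G.edgeSet) :
    badCount G c = #{i | (Sym2.map c (e i)).IsDiag} := by
  have : {x ∈ G.edgeSet | (Sym2.map c x).IsDiag} = e '' {i | (Sym2.map c (e i)).IsDiag} := by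
    ext x
    simp only [← hrange, Set.mem_ofPred_eq, Set.mem_range, Set.mem_image]
    constructor
    · rintro ⟨⟨i, rfl⟩, h⟩
      exact ⟨i, h, rfl⟩
    · rintro ⟨i, h, rfl⟩
      exact ⟨⟨i, rfl⟩, h⟩
  rw [badCount, this, Set.ncard_image_of_injective _ he, ← coe_filter_univ, Set.ncard_coe_finset]

theorem card_filter_mem_iff_apply_mem_add_two_mul {α : Type*} [Fintype α] [DecidableEq α]
    (σ : Equiv.Perm α) (S : Finset α) :
    #{a | a ∈ S ↔ σ a ∈ S} + 2 * #{a ∈ S | σ a ∉ S} = Fintype.card α := by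
  have hsplit : #{a ∈ S | σ a ∈ S} + #{a ∈ S | σ a ∉ S} = #S :=
    card_filter_add_card_filter_not _
  -- `σ` maps `{a | σ a ∈ S}` onto `S`, so `S` is entered as often as it is left.
  have hsplit_preimage : #{a | σ a ∈ S ∧ a ∈ S} + #{a | σ a ∈ S ∧ a ∉ S} = #S := by
    rw [← filter_filter, ← filter_filter, card_filter_add_card_filter_not,
      card_equiv σ (t := S) (by simp)]
  have hcross : #{a | ¬(a ∈ S ↔ σ a ∈ S)} = #{a ∈ S | σ a ∉ S} + #{a | σ a ∈ S ∧ a ∉ S} := by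
    rw [← card_union_of_disjoint, ← filter_univ_mem S, filter_filter, ← filter_or]
    · congr 1
      ext a
      simp only [mem_filter, mem_univ, true_and]
      tauto
    · exact disjoint_left.2 fun a h h' => (mem_filter.1 h').2.2 (mem_filter.1 h).1
  have hstay : #{a ∈ S | σ a ∈ S} = #{a | σ a ∈ S ∧ a ∈ S} := by
    congr 1
    ext a
    simp only [mem_filter, mem_univ, true_and, and_comm]
  have hall := card_filter_add_card_filter_not (s := univ) (fun a => a ∈ S ↔ σ a ∈ S)
  rw [card_univ] at hall
  omega

section Wheel

variable {m : ℕ} [NeZero m]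

theorem Fin.val_add_one_eq_mod (a : Fin m) : (a + 1).val = (a.val + 1) % m := by
  rw [Fin.val_add, Fin.val_one', Nat.add_mod_mod]

@[simp]
theorem wheelGraph_adj_none_some (a : Fin m) : (wheelGraph m).Adj none (some a) := by
  simp [wheelGraph]

@[simp]
theorem wheelGraph_adj_some_none (a : Fin m) : (wheelGraph m).Adj (some a) none :=
  (wheelGraph_adj_none_some a).symm

theorem wheelGraph_adj_some_some (hm : 2 ≤ m) {a b : Fin m} :
    (wheelGraph m).Adj (some a) (some b) ↔ b = a + 1 ∨ a = b + 1 := by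
  have hne (x : Fin m) : x ≠ x + 1 := by
    simp only [ne_eq, left_eq_add, Fin.one_eq_zero_iff]
    omega
  simp only [wheelGraph, reduceCtorEq, false_and, false_or, Option.some.injEq, exists_and_left,
    exists_eq_left']
  rw [← Fin.val_add_one_eq_mod, ← Fin.val_add_one_eq_mod, Fin.val_inj, Fin.val_inj]
  constructor
  · rintro ⟨-, h | h⟩
    exacts [Or.inl h.symm, Or.inr h.symm]
  · rintro (rfl | rfl)
    exacts [⟨hne a, Or.inl rfl⟩, ⟨(hne b).symm, Or.inr rfl⟩]

def wheelEdge (m : ℕ) [NeZero m] : Fin m ⊕ Fin m → Sym2 (Option (Fin m))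
  | .inl a => s(none, some a)
  | .inr a => s(some a, some (a + 1))

theorem wheelEdge_injective (hm : 3 ≤ m) : Injective (wheelEdge m) := by
  rintro (a | a) (b | b) h <;> simp only [wheelEdge, Sym2.eq_iff, Option.some.injEq, reduceCtorEq,
    true_and, and_false, false_and, or_false, and_self, Sum.inl.injEq, Sum.inr.injEq] at h ⊢
  · exact h
  obtain ⟨rfl, -⟩ | ⟨rfl, h⟩ := h
  · rfl
  · refine absurd h.symm ?_
    simp only [add_assoc, left_eq_add, Fin.ext_iff, Fin.val_add, Fin.coe_ofNat_eq_mod,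
      Nat.mod_eq_of_lt (by omega : 1 < m), Nat.reduceAdd, Nat.zero_mod]
    rw [Nat.mod_eq_of_lt (by omega)]
    omega

theorem range_wheelEdge (hm : 2 ≤ m) : Set.range (wheelEdge m) = (wheelGraph m).edgeSet := by
  ext e
  induction e using Sym2.ind with
  | _ v w =>
    rcases v with _ | a <;> rcases w with _ | b <;>
      simp [wheelEdge, wheelGraph_adj_some_some hm, exists_or, eq_comm]

theorem badCount_wheelGraph {α : Type*} [DecidableEq α] (hm : 3 ≤ m) (c : Option (Fin m) → α) :
    badCount (wheelGraph m) c =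
      #{a | c none = c (some a)} + #{a | c (some a) = c (some (a + 1))} := by
  rw [badCount_eq_card_filter _ _ _ (wheelEdge_injective hm) (range_wheelEdge (by omega)),
    card_filter, Fintype.sum_sum_type, card_filter, card_filter]
  simp only [wheelEdge, Sym2.map_mk, Sym2.mk_isDiag_iff]

def wheelColoring (S : Finset (Fin m)) : Option (Fin m) → Fin 2
  | none => 0
  | some a => if a ∈ S then 0 else 1

theorem badCount_wheelColoring (hm : 3 ≤ m) (S : Finset (Fin m)) :
    badCount (wheelGraph m) (wheelColoring S) + 2 * #{a ∈ S | a + 1 ∉ S} = #S + m := by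
  have hspokes : #{a | wheelColoring S none = wheelColoring S (some a)} = #S := by
    conv_rhs => rw [← filter_univ_mem S]
    refine congrArg card (filter_congr fun a _ => ?_)
    by_cases ha : a ∈ S <;> simp [wheelColoring, ha]
  have hrim : #{a | wheelColoring S (some a) = wheelColoring S (some (a + 1))} =
      #{a | a ∈ S ↔ a + 1 ∈ S} := by
    refine congrArg card (filter_congr fun a _ => ?_)
    by_cases ha : a ∈ S <;> by_cases hb : a + 1 ∈ S <;> simp [wheelColoring, ha, hb]
  have hcycle := card_filter_mem_iff_apply_mem_add_two_mul (Equiv.addRight (1 : Fin m)) S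
  rw [Fintype.card_fin] at hcycle
  rw [badCount_wheelGraph hm, hspokes, hrim, add_assoc]
  exact congrArg (#S + ·) hcycle

theorem badCount_wheelColoring_Iio (hm : 3 ≤ m) {s : ℕ} (hs : 0 < s) (hsm : s < m) :
    badCount (wheelGraph m) (wheelColoring (Iio ⟨s, hsm⟩)) = s + m - 2 := by
  have hexit : #{a ∈ Iio (⟨s, hsm⟩ : Fin m) | a + 1 ∉ Iio (⟨s, hsm⟩ : Fin m)} = 1 := by
    rw [card_eq_one]
    refine ⟨⟨s - 1, by omega⟩, ext fun a => ?_⟩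
    simp only [mem_filter, mem_Iio, mem_singleton, not_lt, Fin.lt_def, Fin.ext_iff]
    constructor
    · rintro ⟨h, h'⟩
      rw [Fin.val_add_one_of_lt' (by omega)] at h'
      omega
    · intro h
      rw [Fin.val_add_one_of_lt' (by omega)]
      omega
  have := badCount_wheelColoring hm (Iio (⟨s, hsm⟩ : Fin m))
  rw [hexit, Fin.card_Iio, Fin.val_mk] at this
  omega

theorem badCount_wheelColoring_of_forall_add_one_notMem (hm : 3 ≤ m) {S : Finset (Fin m)}
    (hS : ∀ a ∈ S, a + 1 ∉ S) : badCount (wheelGraph m) (wheelColoring S) + #S = m := by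
  have := badCount_wheelColoring hm S
  rw [filter_true_of_mem hS] at this
  omega

theorem exists_badCount_wheelGraph_eq_of_le {k : ℕ} (hm : 3 ≤ m) (hk1 : m - 1 ≤ k)
    (hk2 : k ≤ 2 * m - 3) : ∃ c : Option (Fin m) → Fin 2, badCount (wheelGraph m) c = k := by
  refine ⟨wheelColoring (Iio ⟨k + 2 - m, by omega⟩), ?_⟩
  rw [badCount_wheelColoring_Iio hm (by omega)]
  omega

theorem exists_card_eq_forall_add_one_notMem {s : ℕ} (hs : 2 * s ≤ m) :
    ∃ S : Finset (Fin m), #S = s ∧ ∀ a ∈ S, a + 1 ∉ S := by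
  let double (j : Fin s) : Fin m := ⟨2 * j, by omega⟩
  have hdouble : Injective double := fun i j h => by simpa [double, Fin.ext_iff] using h
  refine ⟨univ.image double, by rw [card_image_of_injective _ hdouble, card_fin], ?_⟩
  simp only [mem_image, mem_univ, true_and, not_exists]
  rintro _ ⟨i, rfl⟩ j h
  rw [Fin.ext_iff, Fin.val_add_one_of_lt' (by simp only [double]; omega)] at h
  simp only [double] at h
  omega

theorem exists_badCount_wheelGraph_eq_of_lt {k : ℕ} (hm : 3 ≤ m) (hk1 : (m + 1) / 2 ≤ k)
    (hk2 : k < m - 1) : ∃ c : Option (Fin m) → Fin 2, badCount (wheelGraph m) c = k := by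
  obtain ⟨S, hcard, hS⟩ := exists_card_eq_forall_add_one_notMem (m := m) (s := m - k) (by omega)
  have := badCount_wheelColoring_of_forall_add_one_notMem hm hS
  exact ⟨wheelColoring S, by omega⟩

end Wheel

theorem exists_badCount_wheelGraph_eq {m k : ℕ} (hm : 3 ≤ m) (hk1 : (m + 1) / 2 ≤ k)
    (hk2 : k ≤ 2 * m - 3) : ∃ c : Option (Fin m) → Fin 2, badCount (wheelGraph m) c = k := by
  have : NeZero m := ⟨by omega⟩
  obtain hk | hk := lt_or_ge k (m - 1)
  · exact exists_badCount_wheelGraph_eq_of_lt hm hk1 hk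
  · exact exists_badCount_wheelGraph_eq_of_le hm hk hk2

/-- For every `⌊n/2⌋ ≤ k ≤ 2n - 5` the wheel `W_n` (`n > 3`) has a 2-coloring with
exactly `k` monochromatic edges. -/
theorem wheel_two_coloring_exact_bad_edges (n : ℕ) (hn : 3 < n)
    (k : ℕ) (hk1 : n / 2 ≤ k) (hk2 : k ≤ 2 * n - 5) :
    ∃ c : Option (Fin (n - 1)) → Fin 2, badCount (wheelGraph (n - 1)) c = k :=
  exists_badCount_wheelGraph_eq (by omega) (by omega) (by omega)
end

section
/- For the wheel W_n on n > 3 vertices and k ∈ {2n−4, 2n−3}, no vertex coloring of W_n (with any number of colors) has exactly k monochromatic edges. -/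
/-!
The wheel is 3-edge-connected, so a colouring has either no bichromatic edge or at least three.
Concretely, if some rim vertex differs in colour from the hub, then either no rim vertex has the
hub's colour and all (at least three) spokes are bichromatic, or, going around the rim, the colour
switches from the hub's to another one at some rim edge `i, i + 1` and back at another rim edge
`j, j + 1`; these two rim edges and the spoke at `i + 1` are bichromatic. Since the wheel has
`2n - 2` edges, the number of monochromatic ones is `2n - 2` or at most `2n - 5`.
-/

namespace Fin

variable {m : ℕ} [NeZero m]

theorem add_one_eq_iff_val (a b : Fin m) : a + 1 = b ↔ (a.val + 1) % m = b.val := by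
  rw [Fin.ext_iff, Fin.val_add, Fin.val_one', Nat.add_mod_mod]

theorem add_one_ne_self (hm : 2 ≤ m) (a : Fin m) : a + 1 ≠ a := by
  rw [Ne, add_eq_left, Fin.ext_iff, Fin.val_one', Fin.val_zero, Nat.mod_eq_of_lt hm]
  exact one_ne_zero

theorem add_one_add_one_ne_self (hm : 3 ≤ m) (a : Fin m) : a + 1 + 1 ≠ a := by
  rw [Ne, add_assoc, add_eq_left, Fin.ext_iff, Fin.val_add, Fin.val_one', Fin.val_zero,
    Nat.mod_eq_of_lt (by omega : 1 < m), Nat.mod_eq_of_lt (by omega : 2 < m)]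
  omega

open Fin.NatCast in
theorem exists_and_not_add_one {P : Fin m → Prop} {a b : Fin m} (ha : P a) (hb : ¬ P b) :
    ∃ i, P i ∧ ¬ P (i + 1) := by
  by_contra! h
  have hshift : ∀ k : ℕ, P (a + k) := by
    intro k
    induction k with
    | zero => simpa using ha
    | succ k ih => simpa [add_assoc] using h _ ih
  exact hb (by simpa using hshift (b - a).val)

end Fin

namespace wheelGraph

variable {m : ℕ} [NeZero m]

def edge : Bool × Fin m → Sym2 (Option (Fin m))
  | (false, a) => s(none, some a)
  | (true, a) => s(some a, some (a + 1))

theorem edgeSet_eq_range (hm : 2 ≤ m) : (wheelGraph m).edgeSet = Set.range edge := by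
  ext e
  induction e with
  | _ v w =>
    simp only [SimpleGraph.mem_edgeSet, wheelGraph, Set.mem_range, Prod.exists, Bool.exists_bool,
      edge, ← Fin.add_one_eq_iff_val]
    rcases v with _ | a <;> rcases w with _ | b <;> simp
    constructor
    · rintro ⟨-, h | h⟩
      exacts [⟨a, .inl ⟨rfl, h⟩⟩, ⟨b, .inr ⟨rfl, h⟩⟩]
    · rintro ⟨c, ⟨rfl, rfl⟩ | ⟨rfl, rfl⟩⟩
      exacts [⟨(Fin.add_one_ne_self hm c).symm, .inl rfl⟩, ⟨Fin.add_one_ne_self hm c, .inr rfl⟩]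

theorem edge_injective (hm : 3 ≤ m) : Function.Injective (edge (m := m)) := by
  rintro ⟨_ | _, a⟩ ⟨_ | _, b⟩ h <;> simp only [edge, Sym2.eq_iff, Option.some_inj] at h
  · simp_all
  · simp_all
  · simp_all
  · obtain ⟨rfl, -⟩ | ⟨rfl, h⟩ := h
    · rfl
    · exact absurd h (Fin.add_one_add_one_ne_self hm b)

variable {α : Type*} (c : Option (Fin m) → α)

theorem badCount_eq_ncard (hm : 3 ≤ m) :
    badCount (wheelGraph m) c = {x | (Sym2.map c (edge x)).IsDiag}.ncard := by
  have hsep : {e ∈ Set.range edge | (Sym2.map c e).IsDiag} =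
      edge '' {x | (Sym2.map c (edge x)).IsDiag} := by
    ext e; constructor
    · rintro ⟨⟨x, rfl⟩, hx⟩; exact ⟨x, hx, rfl⟩
    · rintro ⟨x, hx, rfl⟩; exact ⟨⟨x, rfl⟩, hx⟩
  rw [badCount, edgeSet_eq_range (by omega), hsep,
    Set.ncard_image_of_injective _ (edge_injective hm)]

theorem three_le_ncard_compl (hm : 3 ≤ m) {b : Fin m} (hb : c (some b) ≠ c none) :
    3 ≤ {x | (Sym2.map c (edge x)).IsDiag}ᶜ.ncard := by
  refine (Set.two_lt_ncard_iff).2 ?_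
  simp only [Set.mem_compl_iff, Set.mem_ofPred_eq]
  by_cases hhub : ∃ a, c (some a) = c none
  · obtain ⟨a, ha⟩ := hhub
    obtain ⟨i, hi, hi1⟩ := Fin.exists_and_not_add_one (P := fun i => c (some i) = c none) ha hb
    obtain ⟨j, hj, hj1⟩ :=
      Fin.exists_and_not_add_one (P := fun i => c (some i) ≠ c none) hb (not_not.2 ha)
    replace hj1 : c (some (j + 1)) = c none := not_not.1 hj1
    refine ⟨(true, i), (true, j), (false, i + 1), ?_⟩
    simp only [edge, Sym2.map_mk, Sym2.mk_isDiag_iff, ne_eq, Prod.mk.injEq, Bool.true_eq_false,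
      true_and, false_and, not_false_eq_true, and_true]
    exact ⟨fun h => hi1 (h ▸ hi), fun h => hj (h ▸ hj1), fun h => hi1 h.symm,
      fun h => hj (h ▸ hi)⟩
  · push Not at hhub
    refine ⟨(false, ⟨0, by omega⟩), (false, ⟨1, by omega⟩), (false, ⟨2, by omega⟩), ?_⟩
    simp [edge, fun a => (hhub a).symm]

theorem badCount_eq_or_add_three_le (hm : 3 ≤ m) :
    badCount (wheelGraph m) c = 2 * m ∨ badCount (wheelGraph m) c + 3 ≤ 2 * m := by
  have hcard : Nat.card (Bool × Fin m) = 2 * m := by simp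
  rw [badCount_eq_ncard c hm]
  by_cases h : ∃ b, c (some b) ≠ c none
  · obtain ⟨b, hb⟩ := h
    have hsplit := Set.ncard_add_ncard_compl {x | (Sym2.map c (edge x)).IsDiag}
    have hthree := three_le_ncard_compl c hm hb
    omega
  · push Not at h
    have hmono : ∀ x, (Sym2.map c (edge x)).IsDiag := by
      rintro ⟨_ | _, a⟩ <;> simp [edge, h]
    left
    simp only [hmono, Set.ofPred_true, Set.ncard_univ, hcard]

end wheelGraph

/-- No vertex coloring of the wheel `W_n` (`n > 3`), with any set of colors, has
exactly `2n - 4` or exactly `2n - 3` monochromatic edges. -/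
theorem wheel_no_coloring_near_all_bad_edges (n : ℕ) (hn : 3 < n)
    {α : Type*} (c : Option (Fin (n - 1)) → α) :
    badCount (wheelGraph (n - 1)) c ≠ 2 * n - 4 ∧
    badCount (wheelGraph (n - 1)) c ≠ 2 * n - 3 := by
  have : NeZero (n - 1) := ⟨by omega⟩
  have := wheelGraph.badCount_eq_or_add_three_le c (by omega : 3 ≤ n - 1)
  omega
end
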